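/- arXiv:1904.05725 — 3 statements merged into one kernel-verified Lean document; each statement's English description precedes it below -/
import Mathlib

section
/- Fix n ≥ 1 and let A be an n×n random matrix whose n² entries are i.i.d. standard normal random variables. Then for every k with 0 ≤ k ≤ n, P(s(A) = k) = P(s(A) = n − k), where s(A) is the stability index of A. -/
/-!
Entrywise negation preserves the law of `A`, and the eigenvalues of `-A` are those of `A` negated,
so `s(-A) = n - s(A)` as soon as `A` has no eigenvalue on the imaginary axis. That exceptional
event is null: if the real matrix `A` has an eigenvalue `z` with `Re z = 0`, then `conj z = -z`
is one as well, so the Kronecker sum `A ⊗ 1 + 1 ⊗ A`, whose eigenvalues are the sums of two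
eigenvalues of `A`, is singular. Hence `A` lies in the zero set of the nonzero polynomial
`det (A ⊗ 1 + 1 ⊗ A)` in its entries, and zero sets of nonzero polynomials are null for products
of atomless measures: for all but finitely many values of one variable, the polynomial in the
remaining ones does not vanish identically.
-/

open Polynomial MeasureTheory ProbabilityTheory

/-- The stability index of a real `n × n` matrix: the number of complex roots, counted
with multiplicity, of its characteristic polynomial that have negative real part. -/
noncomputable def stabilityIndex {n : ℕ} (A : Matrix (Fin n) (Fin n) ℝ) : ℕ :=
  Multiset.card
    (((A.charpoly).map (algebraMap ℝ ℂ)).roots.filter fun z => z.re < 0)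

namespace MvPolynomial

variable {ν : Measure ℝ} [SigmaFinite ν] [NullSingletonClass ν]

theorem measurableSet_setOf_eval_eq_zero {ι : Type*} [Countable ι] (p : MvPolynomial ι ℝ) :
    MeasurableSet {x : ι → ℝ | eval x p = 0} :=
  (isClosed_eq (continuous_eval p) continuous_const).measurableSet

theorem eval_cons_eq_eval_eval_finSuccEquiv {R : Type*} [CommSemiring R] {m : ℕ}
    (p : MvPolynomial (Fin (m + 1)) R) (a : R) (y : Fin m → R) :
    eval (Fin.cons a y : Fin (m + 1) → R) p = eval y ((finSuccEquiv R m p).eval (C a)) := by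
  rw [eval_eq_eval_mv_eval', Polynomial.eval_map, ← Polynomial.eval₂_hom, eval_C]

theorem measure_pi_fin_setOf_eval_eq_zero :
    ∀ {m : ℕ} {p : MvPolynomial (Fin m) ℝ}, p ≠ 0 →
      Measure.pi (fun _ : Fin m => ν) {x | eval x p = 0} = 0
  | 0, p, hp => by
    obtain ⟨c, rfl⟩ := C_surjective (Fin 0) p
    simp [C_ne_zero.mp hp]
  | m + 1, p, hp => by
    set q := finSuccEquiv ℝ m p
    have hq : q ≠ 0 := (map_ne_zero_iff _ (finSuccEquiv ℝ m).injective).mpr hp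
    have hroots : {a : ℝ | q.eval (C a) = 0}.Finite :=
      (finite_setOfPred_isRoot hq).preimage (C_injective _ _).injOn
    have he := (measurePreserving_piFinSuccAbove (fun _ : Fin (m + 1) => ν) 0).symm
    rw [← he.measure_preimage (measurableSet_setOf_eval_eq_zero p).nullMeasurableSet,
      Measure.measure_prod_null (he.measurable (measurableSet_setOf_eval_eq_zero p))]
    filter_upwards [hroots.measure_zero ν |> measure_eq_zero_iff_ae_notMem.mp] with a ha
    have hslice : Prod.mk a ⁻¹' ((MeasurableEquiv.piFinSuccAbove (fun _ => ℝ) 0).symm ⁻¹'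
        {x | eval x p = 0}) = {y | eval y (q.eval (C a)) = 0} := by
      ext y
      simp [MeasurableEquiv.piFinSuccAbove, Fin.insertNthEquiv,
        eval_cons_eq_eval_eval_finSuccEquiv, q]
    rw [hslice]
    exact measure_pi_fin_setOf_eval_eq_zero ha

theorem measure_pi_setOf_eval_eq_zero {ι : Type*} [Fintype ι] {p : MvPolynomial ι ℝ}
    (hp : p ≠ 0) : Measure.pi (fun _ : ι => ν) {x | eval x p = 0} = 0 := by
  let e := Fintype.equivFin ι
  have hρ := measurePreserving_piCongrLeft (fun _ : ι => ν) e.symm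
  rw [← hρ.measure_preimage (measurableSet_setOf_eval_eq_zero p).nullMeasurableSet]
  convert measure_pi_fin_setOf_eval_eq_zero (ν := ν) (p := rename e p)
    ((rename_injective _ e.injective).ne_iff' (map_zero _) |>.mpr hp) using 2
  ext x
  simp [eval_rename, MeasurableEquiv.piCongrLeft, Equiv.piCongrLeft, Equiv.piCongrLeft',
    Function.comp_def]

end MvPolynomial

namespace Matrix

open scoped Kronecker

variable {m n R : Type*} [DecidableEq m] [DecidableEq n]

def kroneckerSum [CommRing R] (A : Matrix m m R) (B : Matrix n n R) :
    Matrix (m × n) (m × n) R :=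
  A ⊗ₖ 1 + 1 ⊗ₖ B

theorem kroneckerSum_map {S : Type*} [CommRing R] [CommRing S] (f : R →+* S)
    (A : Matrix m m R) (B : Matrix n n R) :
    (kroneckerSum A B).map f = kroneckerSum (A.map f) (B.map f) := by
  ext ⟨i, j⟩ ⟨k, l⟩
  simp [kroneckerSum, one_apply, apply_ite f]

variable [Fintype m] [Fintype n]

theorem charpoly_neg [CommRing R] (M : Matrix n n R) :
    (-M).charpoly = (-1) ^ Fintype.card n * M.charpoly.comp (-X) := by
  have hmap : M.charmatrix.map (compRingHom (-X)) = -(-M).charmatrix := by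
    ext i j
    rcases eq_or_ne i j with rfl | hij
    · simp [charmatrix_apply_eq]; ring
    · simp [charmatrix_apply_ne _ _ _ hij]
  have hcomp : M.charpoly.comp (-X) = (-1) ^ Fintype.card n * (-M).charpoly := by
    rw [charpoly, ← coe_compRingHom_apply, RingHom.map_det, RingHom.mapMatrix_apply, hmap,
      det_neg, charpoly]
  rw [hcomp, ← mul_assoc, ← mul_pow, neg_one_mul, neg_neg, one_pow, one_mul]

theorem kroneckerSum_mulVec_vec_vecMulVec [CommRing R] {A : Matrix m m R} {B : Matrix n n R}
    {a b : R} {v : m → R} {w : n → R} (hv : A *ᵥ v = a • v) (hw : B *ᵥ w = b • w) :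
    kroneckerSum A B *ᵥ vec (vecMulVec w v) = (a + b) • vec (vecMulVec w v) := by
  rw [kroneckerSum, add_mulVec, kronecker_mulVec_vec, kronecker_mulVec_vec, Matrix.one_mul,
    transpose_one, Matrix.mul_one, ← vec_add, vecMulVec_mul, vecMul_transpose, mul_vecMulVec, hv,
    hw, ← vec_smul]
  congr 1
  ext i j
  simp only [vecMulVec_apply, add_apply, smul_apply, Pi.smul_apply, smul_eq_mul]
  ring

theorem det_kroneckerSum_eq_zero [Field R] {A : Matrix m m R} {B : Matrix n n R}
    {a : R} {v : m → R} {w : n → R} (hv0 : v ≠ 0) (hw0 : w ≠ 0)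
    (hv : A *ᵥ v = a • v) (hw : B *ᵥ w = -a • w) : (kroneckerSum A B).det = 0 := by
  have hwv : vecMulVec w v ≠ 0 := by
    obtain ⟨j, hj⟩ := Function.ne_iff.mp hw0
    obtain ⟨i, hi⟩ := Function.ne_iff.mp hv0
    exact fun h => mul_ne_zero hj hi congr($h j i)
  exact exists_mulVec_eq_zero_iff.mp ⟨vec (vecMulVec w v), vec_eq_zero_iff.not.mpr hwv,
    by rw [kroneckerSum_mulVec_vec_vecMulVec hv hw, add_neg_cancel, zero_smul]⟩

theorem exists_mulVec_eq_smul_of_isRoot_charpoly [Field R] {M : Matrix n n R} {z : R}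
    (hz : M.charpoly.IsRoot z) : ∃ v ≠ 0, M *ᵥ v = z • v := by
  rw [IsRoot, eval_charpoly] at hz
  obtain ⟨v, hv0, hv⟩ := exists_mulVec_eq_zero_iff.mpr hz
  refine ⟨v, hv0, ?_⟩
  simpa [sub_mulVec, sub_eq_zero, eq_comm] using hv

end Matrix

section RealMatrix

open Matrix

variable {m : Type*} [Fintype m] [DecidableEq m]

noncomputable def complexEigenvalues (A : Matrix m m ℝ) : Multiset ℂ :=
  (A.charpoly.map (algebraMap ℝ ℂ)).roots

theorem card_complexEigenvalues (A : Matrix m m ℝ) :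
    Multiset.card (complexEigenvalues A) = Fintype.card m := by
  rw [complexEigenvalues, ← charpoly_map, splits_iff_card_roots.mp (IsAlgClosed.splits _),
    charpoly_natDegree_eq_dim]

theorem complexEigenvalues_neg (A : Matrix m m ℝ) :
    complexEigenvalues (-A) = (complexEigenvalues A).map Neg.neg := by
  have hsign : ((-1 : ℂ[X]) ^ Fintype.card m) = C ((-1) ^ Fintype.card m) := by simp
  rw [complexEigenvalues, complexEigenvalues, ← charpoly_map, ← charpoly_map,
    Matrix.map_neg _ (map_neg _), charpoly_neg, hsign,
    roots_C_mul _ (pow_ne_zero _ (neg_ne_zero.mpr one_ne_zero)), roots_comp_neg_X]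

theorem conj_mem_complexEigenvalues {A : Matrix m m ℝ} {z : ℂ}
    (hz : z ∈ complexEigenvalues A) :
    starRingEnd ℂ z ∈ complexEigenvalues A := by
  rw [complexEigenvalues, mem_roots', IsRoot.def, eval_map_algebraMap] at hz ⊢
  exact ⟨hz.1, by rw [aeval_conj, hz.2, map_zero]⟩

theorem exists_mulVec_eq_smul_of_mem_complexEigenvalues {A : Matrix m m ℝ} {z : ℂ}
    (hz : z ∈ complexEigenvalues A) :
    ∃ v ≠ 0, A.map (algebraMap ℝ ℂ) *ᵥ v = z • v := by
  rw [complexEigenvalues, ← charpoly_map] at hz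
  exact exists_mulVec_eq_smul_of_isRoot_charpoly (isRoot_of_mem_roots hz)

theorem det_kroneckerSum_self_eq_zero {A : Matrix m m ℝ} {z : ℂ}
    (hz : z ∈ complexEigenvalues A) (hre : z.re = 0) : (kroneckerSum A A).det = 0 := by
  have hconj : starRingEnd ℂ z = -z := Complex.ext (by simp [hre]) (by simp)
  obtain ⟨v, hv0, hv⟩ := exists_mulVec_eq_smul_of_mem_complexEigenvalues hz
  obtain ⟨w, hw0, hw⟩ := exists_mulVec_eq_smul_of_mem_complexEigenvalues
    (conj_mem_complexEigenvalues hz)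
  rw [hconj] at hw
  have hdet := det_kroneckerSum_eq_zero hv0 hw0 hv hw
  rwa [← kroneckerSum_map, ← RingHom.mapMatrix_apply, ← RingHom.map_det,
    map_eq_zero_iff _ (algebraMap ℝ ℂ).injective] at hdet

end RealMatrix

theorem stabilityIndex_le {n : ℕ} (A : Matrix (Fin n) (Fin n) ℝ) : stabilityIndex A ≤ n :=
  (Multiset.card_le_card (Multiset.filter_le _ _)).trans
    ((card_complexEigenvalues A).trans (Fintype.card_fin n)).le

theorem stabilityIndex_neg {n : ℕ} {A : Matrix (Fin n) (Fin n) ℝ}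
    (h : ∀ z ∈ complexEigenvalues A, z.re ≠ 0) :
    stabilityIndex (-A) = n - stabilityIndex A := by
  have hneg : stabilityIndex (-A) =
      Multiset.card ((complexEigenvalues A).filter fun z => ¬ z.re < 0) := by
    rw [stabilityIndex, ← complexEigenvalues, complexEigenvalues_neg, Multiset.filter_map,
      Multiset.card_map]
    congr 1
    refine Multiset.filter_congr fun z hz => ?_
    simp only [Function.comp_apply, Complex.neg_re, Left.neg_neg_iff, not_lt]
    exact (h z hz).symm.le_iff_lt.symm
  have hsum := congrArg Multiset.card
    (Multiset.filter_add_not (fun z : ℂ => z.re < 0) (complexEigenvalues A))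
  rw [Multiset.card_add, card_complexEigenvalues, Fintype.card_fin] at hsum
  rw [hneg, stabilityIndex, ← complexEigenvalues]
  omega

open Matrix in
theorem ae_forall_mem_complexEigenvalues_re_ne_zero {m : Type*} [Fintype m] [DecidableEq m]
    {ν : Measure ℝ} [SigmaFinite ν] [NullSingletonClass ν] :
    ∀ᵐ a ∂(Measure.pi fun _ : m × m => ν),
      ∀ z ∈ complexEigenvalues (of fun i j => a (i, j)), z.re ≠ 0 := by
  set P := (kroneckerSum (mvPolynomialX m m ℝ) (mvPolynomialX m m ℝ)).det
  have hP (a : m × m → ℝ) :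
      MvPolynomial.eval a P =
        (kroneckerSum (of fun i j => a (i, j)) (of fun i j => a (i, j))).det := by
    rw [RingHom.map_det, RingHom.mapMatrix_apply, kroneckerSum_map]
    congr 2 <;> exact mvPolynomialX_mapMatrix_eval (of fun i j => a (i, j))
  have hP0 : P ≠ 0 := by
    intro h
    have h1 : MvPolynomial.eval (fun p => (1 : Matrix m m ℝ) p.1 p.2) P =
        2 ^ Fintype.card (m × m) := by
      rw [hP, show (of fun i j => (1 : Matrix m m ℝ) i j) = 1 from rfl, kroneckerSum,
        one_kronecker_one, ← two_smul ℝ, det_smul, det_one, mul_one]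
    rw [h, map_zero] at h1
    exact two_ne_zero (pow_eq_zero_iff'.mp h1.symm).1
  filter_upwards [measure_eq_zero_iff_ae_notMem.mp
    (MvPolynomial.measure_pi_setOf_eval_eq_zero (ν := ν) hP0)] with a ha z hz hre
  exact ha ((hP a).trans (det_kroneckerSum_self_eq_zero hz hre))

instance ProbabilityTheory.isNegInvariant_gaussianReal (v : NNReal) :
    (gaussianReal 0 v).IsNegInvariant :=
  ⟨by rw [Measure.neg_def, gaussianReal_map_neg, neg_zero]⟩

theorem stmt_2_general (n : ℕ) (k : ℕ) (hk : k ≤ n) :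
    (Measure.pi fun _ : Fin n × Fin n => gaussianReal 0 1)
        {a | stabilityIndex (Matrix.of fun i j => a (i, j)) = k}
      = (Measure.pi fun _ : Fin n × Fin n => gaussianReal 0 1)
        {a | stabilityIndex (Matrix.of fun i j => a (i, j)) = n - k} := by
  have := nullSingletonClass_gaussianReal (μ := 0) one_ne_zero
  rw [← Measure.measure_preimage_neg]
  refine measure_congr (Filter.eventuallyEq_set.mpr ?_)
  filter_upwards [ae_forall_mem_complexEigenvalues_re_ne_zero] with a ha
  have hle := stabilityIndex_le (Matrix.of fun i j => a (i, j))
  change stabilityIndex (-Matrix.of fun i j => a (i, j)) = k ↔ _ = n - k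
  rw [stabilityIndex_neg ha]
  omega

/-- For an `n × n` random matrix with i.i.d. standard normal entries,
`P(s(A) = k) = P(s(A) = n - k)` for every `0 ≤ k ≤ n`. -/
theorem stmt_2 (n : ℕ) (hn : 1 ≤ n) (k : ℕ) (hk : k ≤ n) :
    (Measure.pi fun _ : Fin n × Fin n => gaussianReal 0 1)
        {a | stabilityIndex (Matrix.of fun i j => a (i, j)) = k}
      = (Measure.pi fun _ : Fin n × Fin n => gaussianReal 0 1)
        {a | stabilityIndex (Matrix.of fun i j => a (i, j)) = n - k} :=
  stmt_2_general n k hk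
end

section
/- Fix n ≥ 1 and let A be an n×n random matrix whose n² entries are i.i.d. standard normal random variables. Then P(s(A) is even) = 1/2, and consequently P(s(A) is odd) = 1/2. -/
open Polynomial MeasureTheory ProbabilityTheory

open ComplexConjugate

namespace Multiset

@[elab_as_elim]
theorem induction_on_map_conj_eq_self {motive : Multiset ℂ → Prop} (s : Multiset ℂ)
    (hs : s.map conj = s) (zero : motive 0)
    (cons_ofReal : ∀ (x : ℝ) t, motive t → motive ((x : ℂ) ::ₘ t))
    (cons_cons_conj : ∀ z t, motive t → motive (z ::ₘ conj z ::ₘ t)) : motive s := by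
  induction s using Multiset.strongInductionOn with
  | ih s ih =>
    rcases s.empty_or_exists_mem with rfl | ⟨z, hz⟩
    · exact zero
    obtain ⟨t, rfl⟩ := exists_cons_of_mem hz
    by_cases hz_real : conj z = z
    · obtain ⟨x, rfl⟩ := Complex.conj_eq_iff_real.1 hz_real
      have ht : t.map conj = t := by simpa [hz_real] using hs
      exact cons_ofReal x t (ih t (lt_cons_self t _) ht)
    · have hmem : conj z ∈ t := by
        have : conj z ∈ (z ::ₘ t).map conj := mem_map_of_mem _ (mem_cons_self z t)
        rw [hs] at this
        exact (mem_cons.1 this).resolve_left hz_real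
      obtain ⟨u, rfl⟩ := exists_cons_of_mem hmem
      have hu : u.map conj = u := by
        simpa [cons_swap (conj z)] using hs
      exact cons_cons_conj z u (ih u (lt_of_lt_of_le (lt_cons_self u _) (le_cons_self _ _)) hu)

theorem exists_prod_eq_neg_one_pow_mul_of_map_conj_eq_self {s : Multiset ℂ}
    (hs : s.map conj = s) (h0 : (0 : ℂ) ∉ s) :
    ∃ c : ℝ, 0 < c ∧ s.prod = (-1) ^ card (s.filter fun z => z.re < 0) * c := by
  revert h0
  refine induction_on_map_conj_eq_self s hs ?_ ?_ ?_
  · exact fun _ => ⟨1, one_pos, by simp⟩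
  · intro x t ih h0
    obtain ⟨c, hc, ht⟩ := ih (fun h => h0 (mem_cons_of_mem h))
    have hx : x ≠ 0 := fun h => h0 (by simp [h])
    rcases hx.lt_or_gt with hx | hx
    · refine ⟨-x * c, by nlinarith, ?_⟩
      rw [filter_cons_of_pos _ (by simpa using hx), card_cons, prod_cons, ht]
      push_cast; ring
    · refine ⟨x * c, by positivity, ?_⟩
      rw [filter_cons_of_neg _ (by simpa using hx.le), prod_cons, ht]
      push_cast; ring
  · intro z t ih h0
    obtain ⟨c, hc, ht⟩ := ih (fun h => h0 (mem_cons_of_mem (mem_cons_of_mem h)))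
    have hz : z ≠ 0 := fun h => h0 (by simp [h])
    refine ⟨Complex.normSq z * c, mul_pos (Complex.normSq_pos.2 hz) hc, ?_⟩
    have hprod : (z ::ₘ conj z ::ₘ t).prod = Complex.normSq z * t.prod := by
      rw [prod_cons, prod_cons, ← mul_assoc, Complex.mul_conj]
    by_cases hre : z.re < 0
    · rw [filter_cons_of_pos (p := fun z : ℂ => z.re < 0) _ hre,
        filter_cons_of_pos _ (by simpa using hre), card_cons, card_cons, hprod, ht]
      push_cast; ring
    · rw [filter_cons_of_neg (p := fun z : ℂ => z.re < 0) _ hre,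
        filter_cons_of_neg _ (by simpa using hre), hprod, ht]
      push_cast; ring

end Multiset

theorem even_iff_pos_neg_one_pow_mul {R : Type*} [Ring R] [LinearOrder R] [IsStrictOrderedRing R]
    {k : ℕ} {c : R} (hc : 0 < c) :
    Even k ↔ 0 < (-1) ^ k * c := by
  rcases k.even_or_odd with hk | hk
  · simp [hk.neg_one_pow, hc, hk]
  · simp [hk.neg_one_pow, hc.le, Nat.not_even_iff_odd.2 hk]

theorem Polynomial.map_conj_aroots_complex (p : ℝ[X]) :
    (p.aroots ℂ).map conj = p.aroots ℂ := by
  rw [aroots, ← (IsAlgClosed.splits _).roots_map, map_map]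
  congr 2
  exact RingHom.ext fun x => Complex.conj_ofReal x

theorem even_stabilityIndex_iff_det_pos {n : ℕ} {A : Matrix (Fin n) (Fin n) ℝ}
    (hA : A.det ≠ 0) :
    Even (stabilityIndex A) ↔ 0 < A.det := by
  have hdet : (A.det : ℂ) = (A.charpoly.aroots ℂ).prod := by
    rw [aroots, ← Matrix.charpoly_map, ← Matrix.det_eq_prod_roots_charpoly]
    exact (algebraMap ℝ ℂ).map_det A
  have h0 : (0 : ℂ) ∉ A.charpoly.aroots ℂ := fun h =>
    hA (by exact_mod_cast hdet.trans (Multiset.prod_eq_zero h))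
  obtain ⟨c, hc, hprod⟩ := Multiset.exists_prod_eq_neg_one_pow_mul_of_map_conj_eq_self
    A.charpoly.map_conj_aroots_complex h0
  have hdet_real : A.det = (-1) ^ stabilityIndex A * c := by exact_mod_cast hdet.trans hprod
  rw [hdet_real, ← even_iff_pos_neg_one_pow_mul hc]

theorem odd_stabilityIndex_iff_det_neg {n : ℕ} {A : Matrix (Fin n) (Fin n) ℝ}
    (hA : A.det ≠ 0) :
    Odd (stabilityIndex A) ↔ A.det < 0 := by
  rw [← Nat.not_even_iff_odd, even_stabilityIndex_iff_det_pos hA, not_lt, le_iff_lt_or_eq,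
    or_iff_left hA]

theorem Polynomial.measure_setOf_eval_eq_zero (μ : Measure ℝ) [NullSingletonClass μ]
    {p : ℝ[X]} (hp : p ≠ 0) : μ {x | p.eval x = 0} = 0 :=
  (p.finite_setOfPred_isRoot hp).measure_zero μ

namespace MvPolynomial

theorem measure_setOf_eval_eq_zero_of_fin : ∀ {m : ℕ} (μ : Fin m → Measure ℝ)
    [∀ i, SigmaFinite (μ i)] [∀ i, NullSingletonClass (μ i)] {p : MvPolynomial (Fin m) ℝ},
    p ≠ 0 → Measure.pi μ {x | eval x p = 0} = 0
  | 0, μ, _, _, p, hp => by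
    obtain ⟨c, rfl⟩ := C_surjective (Fin 0) p
    have hc : c ≠ 0 := by rintro rfl; exact hp (map_zero C)
    simp [hc]
  | m + 1, μ, _, _, p, hp => by
    set q := finSuccEquiv ℝ m p
    have hq : q ≠ 0 := (map_ne_zero_iff _ (finSuccEquiv ℝ m).injective).2 hp
    have hS : MeasurableSet {x : Fin (m + 1) → ℝ | eval x p = 0} :=
      (continuous_eval p).measurable (measurableSet_singleton 0)
    have he := (measurePreserving_piFinSuccAbove μ 0).symm
    rw [← he.measure_preimage hS.nullMeasurableSet,
      Measure.prod_apply_symm (hS.preimage (MeasurableEquiv.measurable _))]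
    refine (lintegral_congr_ae ?_).trans lintegral_zero
    have hlc :
        ∀ᵐ s ∂Measure.pi fun j => μ (Fin.succAbove 0 j), eval s q.leadingCoeff ≠ 0 :=
      measure_eq_zero_iff_ae_notMem.1
        (measure_setOf_eval_eq_zero_of_fin _ (leadingCoeff_ne_zero.2 hq))
    filter_upwards [hlc] with s hs
    have hslice : (fun y => (y, s)) ⁻¹'
        ((MeasurableEquiv.piFinSuccAbove (fun _ => ℝ) 0).symm ⁻¹' {x | eval x p = 0}) =
          {y | (q.map (eval s)).eval y = 0} := by
      ext y
      have hcons : (MeasurableEquiv.piFinSuccAbove (fun _ => ℝ) 0).symm (y, s) = Fin.cons y s :=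
        Fin.insertNth_zero' y s
      simp only [Set.mem_preimage, Set.mem_ofPred_eq, hcons, eval_eq_eval_mv_eval', q]
    have hmap : q.map (eval s) ≠ 0 := fun h =>
      hs (by simpa using congrArg (fun r => Polynomial.coeff r q.natDegree) h)
    rw [hslice]
    exact Polynomial.measure_setOf_eval_eq_zero _ hmap

theorem measure_setOf_eval_eq_zero {ι : Type*} [Fintype ι] (μ : ι → Measure ℝ)
    [∀ i, SigmaFinite (μ i)] [∀ i, NullSingletonClass (μ i)] {p : MvPolynomial ι ℝ}
    (hp : p ≠ 0) : Measure.pi μ {x | eval x p = 0} = 0 := by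
  set e := (Fintype.equivFin ι).symm
  have hS : MeasurableSet {x : ι → ℝ | eval x p = 0} :=
    (continuous_eval p).measurable (measurableSet_singleton 0)
  rw [← (measurePreserving_piCongrLeft μ e).measure_preimage hS.nullMeasurableSet]
  have hpre : MeasurableEquiv.piCongrLeft (fun _ => ℝ) e ⁻¹' {x | eval x p = 0} =
      {y | eval y (rename e.symm p) = 0} := by
    have hcomp (y : Fin (Fintype.card ι) → ℝ) :
        MeasurableEquiv.piCongrLeft (fun _ => ℝ) e y = y ∘ e.symm := by
      ext i
      simp [MeasurableEquiv.coe_piCongrLeft, Equiv.piCongrLeft_apply]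
    ext y
    simp [eval_rename, hcomp]
  rw [hpre]
  exact measure_setOf_eval_eq_zero_of_fin _
    ((map_ne_zero_iff _ (rename_injective _ e.symm.injective)).2 hp)

end MvPolynomial

namespace Matrix

variable {ι : Type*} [Fintype ι] [DecidableEq ι]

theorem continuous_det_of : Continuous fun a : ι × ι → ℝ => (of fun i j => a (i, j)).det :=
  (continuous_matrix fun i j => continuous_apply (i, j)).matrix_det

theorem measure_setOf_det_eq_zero (μ : ι × ι → Measure ℝ) [∀ i, SigmaFinite (μ i)]
    [∀ i, NullSingletonClass (μ i)] :
    Measure.pi μ {a | (of fun i j => a (i, j)).det = 0} = 0 := by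
  simpa [eval_det_mvPolynomialX] using
    MvPolynomial.measure_setOf_eval_eq_zero μ (det_mvPolynomialX_ne_zero ι ℝ)

theorem measure_setOf_det_pos_eq_measure_setOf_det_neg [Nonempty ι] (μ : Measure ℝ)
    [SigmaFinite μ] [μ.IsNegInvariant] :
    Measure.pi (fun _ : ι × ι => μ) {a | 0 < (of fun i j => a (i, j)).det} =
      Measure.pi (fun _ : ι × ι => μ) {a | (of fun i j => a (i, j)).det < 0} := by
  obtain ⟨i₀⟩ := ‹Nonempty ι›
  let negRow (p : ι × ι) : ℝ → ℝ := if p.1 = i₀ then Neg.neg else id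
  have hφ : MeasurePreserving (fun a p => negRow p (a p)) (Measure.pi fun _ => μ)
      (Measure.pi fun _ => μ) := by
    refine measurePreserving_pi _ _ fun p => ?_
    by_cases hp : p.1 = i₀
    · simpa [negRow, hp] using Measure.measurePreserving_neg μ
    · simpa [negRow, hp] using MeasurePreserving.id μ
  have hdet (a : ι × ι → ℝ) :
      (of fun i j => negRow (i, j) (a (i, j))).det = -(of fun i j => a (i, j)).det := by
    have : (of fun i j => negRow (i, j) (a (i, j))) =
        updateRow (of fun i j => a (i, j)) i₀ ((-1 : ℝ) • of (fun i j => a (i, j)) i₀) := by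
      ext i j
      by_cases h : i = i₀ <;> simp [negRow, h]
    rw [this, det_updateRow_smul, updateRow_eq_self, neg_one_mul]
  have hneg : MeasurableSet {a : ι × ι → ℝ | (of fun i j => a (i, j)).det < 0} :=
    measurableSet_lt continuous_det_of.measurable measurable_const
  rw [← hφ.measure_preimage hneg.nullMeasurableSet]
  congr 1
  ext a
  simp only [Set.mem_preimage, Set.mem_ofPred_eq, hdet, neg_neg_iff_pos]

end Matrix

theorem measure_setOf_pos_eq_half {α : Type*} [MeasurableSpace α] (μ : Measure α)
    [IsProbabilityMeasure μ] {f : α → ℝ} (hf : Measurable f) (h0 : μ {x | f x = 0} = 0)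
    (hsymm : μ {x | 0 < f x} = μ {x | f x < 0}) : μ {x | 0 < f x} = 1 / 2 := by
  have hunion : {x | 0 < f x} ∪ {x | f x < 0} = {x | f x = 0}ᶜ := by
    ext x
    simp only [Set.mem_union, Set.mem_ofPred_eq, Set.mem_compl_iff]
    exact lt_or_lt_iff_ne.trans ne_comm
  have hsum : μ {x | 0 < f x} + μ {x | f x < 0} = 1 := by
    rw [← measure_union _ (measurableSet_lt hf measurable_const), hunion,
      measure_compl (measurableSet_eq_fun hf measurable_const) (measure_ne_top μ _), h0,
      measure_univ, tsub_zero]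
    exact Set.disjoint_left.2 fun x (h1 : 0 < f x) (h2 : f x < 0) => lt_asymm h1 h2
  rw [ENNReal.eq_div_iff two_ne_zero ENNReal.ofNat_ne_top, two_mul]
  nth_rewrite 2 [hsymm]
  exact hsum

instance instIsNegInvariantGaussianReal (v : NNReal) : (gaussianReal 0 v).IsNegInvariant :=
  ⟨by rw [Measure.neg_def]; simpa using gaussianReal_map_neg (μ := 0) (v := v)⟩

/-- For an `n × n` random matrix with i.i.d. standard normal entries,
`P(s(A)` is even`) = 1/2` and `P(s(A)` is odd`) = 1/2`. -/
theorem stmt_3 (n : ℕ) (hn : 1 ≤ n) :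
    (Measure.pi fun _ : Fin n × Fin n => gaussianReal 0 1)
        {a | Even (stabilityIndex (Matrix.of fun i j => a (i, j)))} = 1 / 2
    ∧ (Measure.pi fun _ : Fin n × Fin n => gaussianReal 0 1)
        {a | Odd (stabilityIndex (Matrix.of fun i j => a (i, j)))} = 1 / 2 := by
  have := nullSingletonClass_gaussianReal (μ := 0) one_ne_zero
  have : Nonempty (Fin n) := ⟨⟨0, hn⟩⟩
  have hsingular := Matrix.measure_setOf_det_eq_zero fun _ : Fin n × Fin n => gaussianReal 0 1
  have hsymm :=
    Matrix.measure_setOf_det_pos_eq_measure_setOf_det_neg (ι := Fin n) (gaussianReal 0 1)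
  have hpos := measure_setOf_pos_eq_half _ Matrix.continuous_det_of.measurable hsingular hsymm
  have hnonsingular := measure_eq_zero_iff_ae_notMem.1 hsingular
  constructor
  · rw [← hpos]
    exact measure_congr <|
      hnonsingular.mono fun a ha => propext (even_stabilityIndex_iff_det_pos ha)
  · rw [← hpos, hsymm]
    exact measure_congr <|
      hnonsingular.mono fun a ha => propext (odd_stabilityIndex_iff_det_neg ha)
end

section
/- Let σ > 0 and ρ > 0, and let U ~ N(0, σ²) and V ~ N(0, ρ²) be independent normal random variables with zero mean. Then P(U² − V² > 0) = (2/π)·arctan(σ/ρ), and consequently P(U² − V² < 0) = (2/π)·arctan(ρ/σ). -/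
/-!
Write `U = σX`, `V = ρY` with `X, Y` independent standard normal. In polar coordinates the
density of `(X, Y)` factors as `r e^{-r²/2} dr · dθ / (2π)`, so the probability of a cone is
its angle divided by `2π`. The event `σ²x² > ρ²y²` is the double cone `|θ| < α` or
`|θ| > π - α` with `α = arctan (σ / ρ)`, of angle `4α`. Swapping the coordinates gives the
second identity.
-/

open MeasureTheory ProbabilityTheory Real Set

lemma integral_Ioi_mul_exp_neg_mul_sq {b : ℝ} (hb : 0 < b) :
    ∫ r in Ioi (0 : ℝ), r * exp (-b * r ^ 2) = (2 * b)⁻¹ := by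
  exact_mod_cast integral_mul_cexp_neg_mul_sq (b := (b : ℂ)) (by simpa using hb)

lemma gaussianReal_zero_one_prod_self_eq_withDensity :
    (gaussianReal 0 1).prod (gaussianReal 0 1) = volume.withDensity
      fun p : ℝ × ℝ => ENNReal.ofReal ((2 * π)⁻¹ * exp (-(p.1 ^ 2 + p.2 ^ 2) / 2)) := by
  have hpdf : ∀ p : ℝ × ℝ, gaussianPDF 0 1 p.1 * gaussianPDF 0 1 p.2 =
      ENNReal.ofReal ((2 * π)⁻¹ * exp (-(p.1 ^ 2 + p.2 ^ 2) / 2)) := fun p => by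
    rw [gaussianPDF, gaussianPDF, ← ENNReal.ofReal_mul (gaussianPDFReal_nonneg _ _ _)]
    simp only [gaussianPDFReal, NNReal.coe_one, mul_one, sub_zero]
    rw [mul_mul_mul_comm, ← mul_inv, mul_self_sqrt (by positivity), ← exp_add]
    ring_nf
  simp_rw [← hpdf]
  refine Measure.prod_eq fun s t hs ht => ?_
  rw [Measure.volume_eq_prod, withDensity_apply _ (hs.prod ht), ← Measure.prod_restrict,
    lintegral_prod_mul (measurable_gaussianPDF 0 1).aemeasurable
      (measurable_gaussianPDF 0 1).aemeasurable,
    gaussianReal_apply 0 one_ne_zero s, gaussianReal_apply 0 one_ne_zero t]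

theorem gaussianReal_zero_one_prod_self_apply_of_cone {C : Set (ℝ × ℝ)} (hC : MeasurableSet C)
    (hC_cone : ∀ r : ℝ, 0 < r → ∀ p, r • p ∈ C ↔ p ∈ C) :
    (gaussianReal 0 1).prod (gaussianReal 0 1) C =
      ENNReal.ofReal (2 * π)⁻¹ * volume ({θ | (cos θ, sin θ) ∈ C} ∩ Ioo (-π) π) := by
  set f : ℝ × ℝ → ENNReal := fun p => ENNReal.ofReal ((2 * π)⁻¹ * exp (-(p.1 ^ 2 + p.2 ^ 2) / 2))
  have hS : MeasurableSet {θ | (cos θ, sin θ) ∈ C} := hC.preimage (by fun_prop)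
  have hpolar : ∀ q ∈ polarCoord.target, ENNReal.ofReal q.1 • C.indicator f (polarCoord.symm q)
      = ENNReal.ofReal (q.1 * exp (-(1 / 2) * q.1 ^ 2) * (2 * π)⁻¹) *
          {θ | (cos θ, sin θ) ∈ C}.indicator 1 q.2 := by
    rintro ⟨r, θ⟩ ⟨hr, -⟩
    have hpt : polarCoord.symm (r, θ) = r • (cos θ, sin θ) := by simp [polarCoord_symm_apply]
    have hnorm : (r * cos θ) ^ 2 + (r * sin θ) ^ 2 = r ^ 2 := by
      linear_combination r ^ 2 * sin_sq_add_cos_sq θ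
    rw [hpt]
    by_cases hθ : (cos θ, sin θ) ∈ C
    · rw [indicator_of_mem ((hC_cone r hr _).2 hθ), indicator_of_mem (show θ ∈ _ from hθ)]
      simp only [f, Prod.smul_mk, smul_eq_mul, hnorm, Pi.one_apply, mul_one]
      rw [← ENNReal.ofReal_mul hr.le]
      ring_nf
    · rw [indicator_of_notMem (fun h => hθ ((hC_cone r hr _).1 h)),
        indicator_of_notMem (show θ ∉ _ from hθ)]
      simp
  have hradial : ∫⁻ r in Ioi 0, ENNReal.ofReal (r * exp (-(1 / 2) * r ^ 2) * (2 * π)⁻¹)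
      = ENNReal.ofReal (2 * π)⁻¹ := by
    rw [← ofReal_integral_eq_lintegral_ofReal
      ((integrable_mul_exp_neg_mul_sq one_half_pos).integrableOn.mul_const _)
      ((ae_restrict_mem measurableSet_Ioi).mono fun r (hr : 0 < r) => by positivity),
      integral_mul_const, integral_Ioi_mul_exp_neg_mul_sq one_half_pos]
    norm_num
  rw [gaussianReal_zero_one_prod_self_eq_withDensity, withDensity_apply _ hC,
    ← lintegral_indicator hC, ← lintegral_comp_polarCoord_symm,
    setLIntegral_congr_fun polarCoord.open_target.measurableSet hpolar, polarCoord_target,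
    Measure.volume_eq_prod, ← Measure.prod_restrict,
    lintegral_prod_mul (f := fun r => ENNReal.ofReal (r * exp (-(1 / 2) * r ^ 2) * (2 * π)⁻¹))
      (by fun_prop) (measurable_one.indicator hS).aemeasurable, hradial,
    lintegral_indicator_one hS, Measure.restrict_apply hS]

lemma cos_lt_abs_cos_iff {α θ : ℝ} (hα : 0 ≤ α) (hα' : α ≤ π) (hθ : |θ| ≤ π) :
    cos α < |cos θ| ↔ |θ| < α ∨ π - α < |θ| := by
  have hθ₀ := abs_nonneg θ
  rw [lt_abs, ← cos_abs θ, ← cos_pi_sub, strictAntiOn_cos.lt_iff_gt ⟨hα, hα'⟩ ⟨hθ₀, hθ⟩,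
    strictAntiOn_cos.lt_iff_gt ⟨hα, hα'⟩ ⟨by linarith, by linarith⟩, sub_lt_comm]

lemma volume_Ioo_union_Ioo_union_Ioo {α : ℝ} (hα : 0 ≤ α) (hα' : α ≤ π / 2) :
    volume (Ioo (-π) (-π + α) ∪ Ioo (-α) α ∪ Ioo (π - α) π) = ENNReal.ofReal (4 * α) := by
  have hπ := pi_pos
  have hdisj {a₁ a₂ b₁ b₂ : ℝ} (h : a₂ ≤ b₁) : Disjoint (Ioo a₁ a₂) (Ioo b₁ b₂) :=
    Ioo_disjoint_Ioo.2 (min_le_of_left_le (le_max_of_le_right h))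
  rw [measure_union ((hdisj (by linarith)).union_left (hdisj (by linarith))) measurableSet_Ioo,
    measure_union (hdisj (by linarith)) measurableSet_Ioo, volume_Ioo, volume_Ioo, volume_Ioo,
    ← ENNReal.ofReal_add (by linarith) (by linarith),
    ← ENNReal.ofReal_add (by linarith) (by linarith)]
  ring_nf

lemma volume_setOf_sq_sub_sq_pos_inter_Ioo {a b : ℝ} (ha : 0 < a) (hb : 0 < b) :
    volume ({θ | 0 < (a * cos θ) ^ 2 - (b * sin θ) ^ 2} ∩ Ioo (-π) π) =
      ENNReal.ofReal (4 * arctan (a / b)) := by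
  set α := arctan (a / b)
  have hα : 0 < α := arctan_pos.2 (div_pos ha hb)
  have hα' : α < π / 2 := arctan_lt_pi_div_two _
  have hcos_sq : (a ^ 2 + b ^ 2) * cos α ^ 2 = b ^ 2 := by
    rw [cos_sq_arctan]; field_simp; ring
  have hcond (θ : ℝ) : 0 < (a * cos θ) ^ 2 - (b * sin θ) ^ 2 ↔ cos α < |cos θ| := by
    have : (a * cos θ) ^ 2 - (b * sin θ) ^ 2 = (a ^ 2 + b ^ 2) * (cos θ ^ 2 - cos α ^ 2) := by
      linear_combination (-b ^ 2) * sin_sq_add_cos_sq θ + hcos_sq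
    rw [this, mul_pos_iff_of_pos_left (by positivity), sub_pos, sq_lt_sq,
      abs_of_pos (cos_arctan_pos _)]
  have hmem {θ : ℝ} (hθ : -π < θ ∧ θ < π) :
      0 < (a * cos θ) ^ 2 - (b * sin θ) ^ 2 ↔ (-α < θ ∧ θ < α) ∨ (π - α < θ ∨ θ < -(π - α)) := by
    rw [hcond, cos_lt_abs_cos_iff hα.le (by linarith) (abs_le.2 ⟨hθ.1.le, hθ.2.le⟩), abs_lt,
      lt_abs, lt_neg]
  have hset : {θ | 0 < (a * cos θ) ^ 2 - (b * sin θ) ^ 2} ∩ Ioo (-π) π =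
      Ioo (-π) (-π + α) ∪ Ioo (-α) α ∪ Ioo (π - α) π := by
    ext θ
    simp only [mem_inter_iff, mem_ofPred_eq, mem_union, mem_Ioo]
    constructor
    · rintro ⟨h, hθ⟩
      grind [hmem hθ]
    · intro h
      have hθ : -π < θ ∧ θ < π := by grind
      grind [hmem hθ]
  rw [hset, volume_Ioo_union_Ioo_union_Ioo hα.le hα'.le]

lemma gaussianReal_zero_sq_eq_map (σ : NNReal) :
    gaussianReal 0 (σ ^ 2) = (gaussianReal 0 1).map ((σ : ℝ) * ·) := by
  rw [gaussianReal_map_const_mul, mul_zero, mul_one]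
  congr

lemma gaussianReal_prod_apply_sq_sub_sq_pos (σ ρ : NNReal) (hσ : 0 < σ) (hρ : 0 < ρ) :
    (gaussianReal 0 (σ ^ 2)).prod (gaussianReal 0 (ρ ^ 2)) {p : ℝ × ℝ | 0 < p.1 ^ 2 - p.2 ^ 2}
      = ENNReal.ofReal (2 / π * arctan ((σ : ℝ) / (ρ : ℝ))) := by
  set C := {p : ℝ × ℝ | 0 < ((σ : ℝ) * p.1) ^ 2 - ((ρ : ℝ) * p.2) ^ 2}
  have hC : MeasurableSet C := measurableSet_lt measurable_const (by fun_prop)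
  have hC_cone : ∀ r : ℝ, 0 < r → ∀ p, r • p ∈ C ↔ p ∈ C := fun r hr p => by
    have : ((σ : ℝ) * (r * p.1)) ^ 2 - ((ρ : ℝ) * (r * p.2)) ^ 2
        = r ^ 2 * (((σ : ℝ) * p.1) ^ 2 - ((ρ : ℝ) * p.2) ^ 2) := by ring
    simp only [C, mem_ofPred_eq, Prod.smul_fst, Prod.smul_snd, smul_eq_mul, this,
      mul_pos_iff_of_pos_left (pow_pos hr 2)]
  rw [gaussianReal_zero_sq_eq_map, gaussianReal_zero_sq_eq_map,
    Measure.map_prod_map _ _ (measurable_const_mul _) (measurable_const_mul _),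
    Measure.map_apply (by fun_prop) (measurableSet_lt measurable_const (by fun_prop))]
  change (gaussianReal 0 1).prod (gaussianReal 0 1) C = _
  rw [gaussianReal_zero_one_prod_self_apply_of_cone hC hC_cone]
  simp only [C, mem_ofPred_eq]
  rw [volume_setOf_sq_sub_sq_pos_inter_Ioo (by exact_mod_cast hσ) (by exact_mod_cast hρ),
    ← ENNReal.ofReal_mul (by positivity)]
  congr 1
  field_simp
  ring

/-- If `U ~ N(0, σ²)` and `V ~ N(0, ρ²)` are independent centered normal random
variables (`σ, ρ > 0`), then `P(U² - V² > 0) = (2/π) arctan(σ/ρ)` and consequently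
`P(U² - V² < 0) = (2/π) arctan(ρ/σ)`. -/
theorem stmt_16 (σ ρ : NNReal) (hσ : 0 < σ) (hρ : 0 < ρ) :
    (Measure.prod (gaussianReal 0 (σ ^ 2)) (gaussianReal 0 (ρ ^ 2)))
        {p : ℝ × ℝ | 0 < p.1 ^ 2 - p.2 ^ 2}
      = ENNReal.ofReal (2 / Real.pi * Real.arctan ((σ : ℝ) / (ρ : ℝ)))
    ∧ (Measure.prod (gaussianReal 0 (σ ^ 2)) (gaussianReal 0 (ρ ^ 2)))
        {p : ℝ × ℝ | p.1 ^ 2 - p.2 ^ 2 < 0}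
      = ENNReal.ofReal (2 / Real.pi * Real.arctan ((ρ : ℝ) / (σ : ℝ))) := by
  refine ⟨gaussianReal_prod_apply_sq_sub_sq_pos σ ρ hσ hρ, ?_⟩
  have hswap : {p : ℝ × ℝ | p.1 ^ 2 - p.2 ^ 2 < 0}
      = Prod.swap ⁻¹' {p : ℝ × ℝ | 0 < p.1 ^ 2 - p.2 ^ 2} := by
    ext p
    simp only [mem_ofPred_eq, mem_preimage, Prod.fst_swap, Prod.snd_swap, sub_neg, sub_pos]
  rw [hswap, ← Measure.map_apply measurable_swap (measurableSet_lt measurable_const (by fun_prop)),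
    Measure.prod_swap, gaussianReal_prod_apply_sq_sub_sq_pos ρ σ hρ hσ]
end
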